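/- Let λ₁, λ₂ be nonzero rational numbers with λ₁ + λ₂ ≠ 0, and let N₁, N₂, η₁, η₂ be elements of a commutative ℚ-algebra satisfying N₁λ₁ = N₂λ₂ and η₁λ₁ = η₂λ₂ (scalar multiplication by rationals). Set N = N₁ + N₂, η = η₁ + η₂, and λ = λ₁λ₂/(λ₁+λ₂). Then (1/2)λ²·N·η·(η - N·c₁) = (1/2)λ₁²·N₁·η₁·(η₁ - N₁·c₁) + (1/2)λ₂²·N₂·η₂·(η₂ - N₂·c₁) for any element c₁ of the algebra. -/

import Mathlib

/-!
With `A = λ₁N₁ = λ₂N₂` and `B = λ₁η₁ = λ₂η₂`, the harmonic-mean choice of `λ` gives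
`λN = A` and `λη = B`, so each of the three terms has the form `½ A B (η' - N' c₁)`,
and the identity is the additivity of `η' - N' c₁`.
-/

theorem harmonic_smul_add_eq {K M : Type*} [Field K] [AddCommGroup M] [Module K M]
    {a b : K} (hab : a + b ≠ 0) {x y : M} (h : a • x = b • y) :
    (a * b / (a + b)) • (x + y) = a • x := by
  refine smul_right_injective M hab ?_
  simp only [smul_smul, mul_div_cancel₀ _ hab, smul_add]
  rw [mul_smul a b y, ← h]
  module

theorem mul_sq_smul_mul_mul {K R : Type*} [CommSemiring K] [Semiring R] [Algebra K R]
    (c a : K) (x y z : R) : (c * a ^ 2) • (x * y * z) = c • ((a • x) * (a • y) * z) := by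
  rw [smul_mul_smul_comm, smul_mul_assoc, smul_smul, sq, mul_assoc]

theorem reducible_cover_lambda_identity_general {R : Type*} [CommRing R] [Algebra ℚ R]
    (lam₁ lam₂ : ℚ)
    (hsum : lam₁ + lam₂ ≠ 0)
    (N₁ N₂ η₁ η₂ c₁ : R)
    (hN : lam₁ • N₁ = lam₂ • N₂)
    (hη : lam₁ • η₁ = lam₂ • η₂) :
    ((1 / 2 : ℚ) * (lam₁ * lam₂ / (lam₁ + lam₂)) ^ 2) •
        ((N₁ + N₂) * (η₁ + η₂) * ((η₁ + η₂) - (N₁ + N₂) * c₁)) =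
      ((1 / 2 : ℚ) * lam₁ ^ 2) • (N₁ * η₁ * (η₁ - N₁ * c₁)) +
        ((1 / 2 : ℚ) * lam₂ ^ 2) • (N₂ * η₂ * (η₂ - N₂ * c₁)) := by
  rw [mul_sq_smul_mul_mul, mul_sq_smul_mul_mul, mul_sq_smul_mul_mul]
  rw [harmonic_smul_add_eq hsum hN, harmonic_smul_add_eq hsum hη, ← hN, ← hη]
  rw [← smul_add, ← mul_add, add_mul, add_sub_add_comm]

theorem reducible_cover_lambda_identity {R : Type*} [CommRing R] [Algebra ℚ R]
    (lam₁ lam₂ : ℚ) (hlam₁ : lam₁ ≠ 0) (hlam₂ : lam₂ ≠ 0)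
    (hsum : lam₁ + lam₂ ≠ 0)
    (N₁ N₂ η₁ η₂ c₁ : R)
    (hN : lam₁ • N₁ = lam₂ • N₂)
    (hη : lam₁ • η₁ = lam₂ • η₂) :
    ((1 / 2 : ℚ) * (lam₁ * lam₂ / (lam₁ + lam₂)) ^ 2) •
        ((N₁ + N₂) * (η₁ + η₂) * ((η₁ + η₂) - (N₁ + N₂) * c₁)) =
      ((1 / 2 : ℚ) * lam₁ ^ 2) • (N₁ * η₁ * (η₁ - N₁ * c₁)) +
        ((1 / 2 : ℚ) * lam₂ ^ 2) • (N₂ * η₂ * (η₂ - N₂ * c₁)) :=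
  reducible_cover_lambda_identity_general lam₁ lam₂ hsum N₁ N₂ η₁ η₂ c₁ hN hη
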